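/- arXiv:2011.04083 — 3 statements merged into one kernel-verified Lean document; each statement's English description precedes it below -/
import Mathlib

section
/- Let d be a quasi-metric on a set Ω with quasi-metric constant κ (i.e., d is symmetric, positive, and d(x,y) ≤ κ(d(x,z) + d(z,y)) for all x,y,z). Fix x₁ ∈ Ω. Then the function d̃(x,y) = d(x,y)/(d(x,x₁)·d(y,x₁)) defined on Ω \ {x₁} is a quasi-metric with quasi-metric constant 4κ². -/
/-!
Clearing denominators, the quasi-triangle inequality for `d̃` is the Ptolemy-type inequality
`d x y * d z x₁ ≤ 4 κ² (d x z * d y x₁ + d z y * d x x₁)` for the original quasi-metric.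
By symmetry assume `d x x₁ ≤ d y x₁`. If `d z x₁ ≤ 2 κ d x x₁`, bound `d x y` through `z`;
otherwise the quasi-triangle inequality through `x` forces `d z x₁ ≤ 2 κ d x z`, and we bound
`d x y` through `x₁`.
-/

section QuasiMetric

variable {Ω : Type*} {d : Ω → Ω → ℝ} {κ : ℝ}

theorem quasiMetric_ptolemy_of_le (hκ : 0 ≤ κ) (hsymm : ∀ x y, d x y = d y x)
    (hnonneg : ∀ x y, 0 ≤ d x y) (htri : ∀ x y z, d x y ≤ κ * (d x z + d z y))
    {x y z w : Ω} (hxy : d x w ≤ d y w) :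
    d x y * d z w ≤ 4 * κ ^ 2 * (d x z * d y w + d z y * d x w) := by
  have hp := hnonneg x z
  have hq := hnonneg z y
  have hc := hnonneg z w
  rcases le_or_gt (d z w) (2 * κ * d x w) with hclose | hfar
  · have hclose' : d z w ≤ 2 * κ * d y w := hclose.trans (by gcongr)
    have hsum : 0 ≤ d x z * d y w + d z y * d x w :=
      add_nonneg (mul_nonneg hp (hnonneg y w)) (mul_nonneg hq (hnonneg x w))
    calc d x y * d z w ≤ κ * d x z * d z w + κ * d z y * d z w := by
          linarith [mul_le_mul_of_nonneg_right (htri x y z) hc]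
      _ ≤ κ * d x z * (2 * κ * d y w) + κ * d z y * (2 * κ * d x w) := by gcongr
      _ ≤ 4 * κ ^ 2 * (d x z * d y w + d z y * d x w) := by
          nlinarith [mul_nonneg (sq_nonneg κ) hsum]
  · have hzx : d z w ≤ κ * (d x z + d x w) := by
      simpa only [hsymm x z, add_comm] using htri z w x
    have hcp : d z w ≤ 2 * κ * d x z := by linarith
    have hr : d x y ≤ 2 * κ * d y w := by
      linarith [hsymm w y ▸ htri x y w, mul_le_mul_of_nonneg_left hxy hκ]
    calc d x y * d z w ≤ 2 * κ * d y w * (2 * κ * d x z) :=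
          mul_le_mul hr hcp hc (mul_nonneg (mul_nonneg zero_le_two hκ) (hnonneg y w))
      _ = 4 * κ ^ 2 * (d x z * d y w) := by ring
      _ ≤ 4 * κ ^ 2 * (d x z * d y w + d z y * d x w) := by
          gcongr
          exact le_add_of_nonneg_right (mul_nonneg hq (hnonneg x w))

theorem quasiMetric_ptolemy (hκ : 0 ≤ κ) (hsymm : ∀ x y, d x y = d y x)
    (hnonneg : ∀ x y, 0 ≤ d x y) (htri : ∀ x y z, d x y ≤ κ * (d x z + d z y))
    (x y z w : Ω) :
    d x y * d z w ≤ 4 * κ ^ 2 * (d x z * d y w + d z y * d x w) := by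
  rcases le_total (d x w) (d y w) with hxy | hyx
  · exact quasiMetric_ptolemy_of_le hκ hsymm hnonneg htri hxy
  · have := quasiMetric_ptolemy_of_le hκ hsymm hnonneg htri (z := z) hyx
    rwa [hsymm y x, hsymm y z, hsymm z x, add_comm] at this

end QuasiMetric

/-- Hansen–Netuka / Pinchover lemma on punctured quasi-metric spaces:
if `d` is a quasi-metric on `Ω` with constant `κ`, and `x₁ ∈ Ω`, then
`d̃ x y = d x y / (d x x₁ * d y x₁)` is a quasi-metric on `Ω \ {x₁}` with
constant `4 κ ^ 2`. -/
theorem punctured_quasi_metric {Ω : Type*} (d : Ω → Ω → ℝ) (κ : ℝ) (hκ : 0 < κ)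
    (hsymm : ∀ x y, d x y = d y x)
    (hpos : ∀ x y, 0 < d x y)
    (htri : ∀ x y z, d x y ≤ κ * (d x z + d z y))
    (x₁ : Ω) :
    (∀ x y, x ≠ x₁ → y ≠ x₁ →
        d x y / (d x x₁ * d y x₁) = d y x / (d y x₁ * d x x₁)) ∧
    (∀ x y, x ≠ x₁ → y ≠ x₁ → 0 < d x y / (d x x₁ * d y x₁)) ∧
    (∀ x y z, x ≠ x₁ → y ≠ x₁ → z ≠ x₁ →
        d x y / (d x x₁ * d y x₁) ≤
          4 * κ ^ 2 * (d x z / (d x x₁ * d z x₁) + d z y / (d z x₁ * d y x₁))) := by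
  refine ⟨fun x y _ _ => by rw [hsymm x y, mul_comm],
    fun x y _ _ => div_pos (hpos x y) (mul_pos (hpos x x₁) (hpos y x₁)),
    fun x y z _ _ _ => ?_⟩
  have ha := hpos x x₁
  have hb := hpos y x₁
  have hc := hpos z x₁
  have hptolemy := quasiMetric_ptolemy hκ.le hsymm (fun x y => (hpos x y).le) htri x y z x₁
  calc d x y / (d x x₁ * d y x₁)
      = d x y * d z x₁ / (d x x₁ * d y x₁ * d z x₁) := by field_simp
    _ ≤ 4 * κ ^ 2 * (d x z * d y x₁ + d z y * d x x₁) / (d x x₁ * d y x₁ * d z x₁) := by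
        gcongr
    _ = 4 * κ ^ 2 * (d x z / (d x x₁ * d z x₁) + d z y / (d z x₁ * d y x₁)) := by
        field_simp
end

section
/- Let (Ω, ω) be a measure space and K a symmetric measurable kernel on Ω × Ω with values in (0,∞] such that K(x,y)/(m(x)m(y)) is a quasi-metric kernel with constant κ, for some measurable m: Ω → (0,∞). Define T h(x) = ∫_Ω K(x,y) h(y) dω(y). Then there exists c > 0 depending only on κ such that ∑_{j=0}^∞ T^j m(x) ≥ m(x) · exp(c · T m(x)/m(x)) for all x ∈ Ω. -/
/-!
Put `k = K / (m ⊗ m)` and `μ = m² ω`. Then `T^j m = m · S^j 1` for the integral operator `S` of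
`k` with respect to `μ`, and the quasi-triangle inequality for `1/k` becomes
`β · min (k p r) (k r q) ≤ k p q` with `β = 1 / (2 max κ 1)`.

Fix `x` and put `f = k x ·`. By induction on `j`,
`β^j (∫ min (f y) (f w) dμ(w))^j ≤ j! · S^j 1 (y)` for every `y`: the inductive step bounds
`k y z ≥ β min (f y) (f z)` and then uses
`(∫ g)^(n+1) ≤ (n+1) ∫ g(z) (∫ min (g z) (g w) dw)^n dz`, obtained by integrating
`∏ g(yᵢ) ≤ ∑ₖ g(yₖ) ∏_{i ≠ k} min (g yₖ) (g yᵢ)` (take `k` where `g(yₖ)` is largest) over `Ωⁿ⁺¹`.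
The same step at `y = x`, with the cap `f y` removed, gives `(β · S 1 x)^j ≤ j! · S^j 1 x`,
and summing over `j` gives the exponential.
-/

open MeasureTheory ENNReal

/-- Extended exponential: `expE t = e^t` for finite `t`, and `∞` for `t = ∞`. -/
noncomputable def expE (t : ℝ≥0∞) : ℝ≥0∞ :=
  if t = ∞ then ∞ else ENNReal.ofReal (Real.exp t.toReal)

open scoped Nat

theorem expE_le_tsum_pow_div_factorial (t : ℝ≥0∞) :
    expE t ≤ ∑' n : ℕ, t ^ n / (n ! : ℝ≥0∞) := by
  by_cases ht : t = ∞
  · calc expE t = t ^ 1 / (1 ! : ℝ≥0∞) := by simp [expE, ht]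
      _ ≤ _ := ENNReal.le_tsum 1
  · have hterm (n : ℕ) : t ^ n / (n ! : ℝ≥0∞) = ENNReal.ofReal (t.toReal ^ n / n !) := by
      rw [ENNReal.ofReal_div_of_pos (by positivity), ENNReal.ofReal_pow ENNReal.toReal_nonneg,
        ENNReal.ofReal_toReal ht, ENNReal.ofReal_natCast]
    rw [expE, if_neg ht, tsum_congr hterm, ← ENNReal.ofReal_tsum_of_nonneg
      (fun n => by positivity) (Real.summable_pow_div_factorial _), Real.exp_eq_exp_ℝ,
      NormedSpace.exp_eq_tsum_div]

theorem ENNReal.prod_le_sum_mul_prod_min {n : ℕ} (a : Fin (n + 1) → ℝ≥0∞) :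
    ∏ i, a i ≤ ∑ k, a k * ∏ j, min (a k) (a (k.succAbove j)) := by
  obtain ⟨k, hk⟩ := Finite.exists_max a
  calc ∏ i, a i = a k * ∏ j, min (a k) (a (k.succAbove j)) := by
        rw [Fin.prod_univ_succAbove a k]
        simp only [min_eq_right (hk _)]
    _ ≤ _ := Finset.single_le_sum (f := fun k => a k * ∏ j, min (a k) (a (k.succAbove j)))
        (fun _ _ => zero_le) (Finset.mem_univ k)

theorem ENNReal.ofReal_inv_two_mul_mul_min_le {a b c : ℝ≥0∞} {κ : ℝ} (hκ : 0 < κ) (ha : a ≠ 0)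
    (hb : b ≠ 0) (hc : c ≠ 0) (h : a⁻¹.toReal ≤ κ * (b⁻¹.toReal + c⁻¹.toReal)) :
    ENNReal.ofReal (2 * κ)⁻¹ * min b c ≤ a := by
  have hM : min b c ≠ 0 := by simp [hb, hc]
  have h' : a⁻¹ ≤ ENNReal.ofReal κ * (b⁻¹ + c⁻¹) := by
    rw [← ENNReal.ofReal_toReal (inv_ne_top.2 ha), ← ENNReal.ofReal_toReal (inv_ne_top.2 hb),
      ← ENNReal.ofReal_toReal (inv_ne_top.2 hc), ← ENNReal.ofReal_add toReal_nonneg toReal_nonneg,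
      ← ENNReal.ofReal_mul hκ.le]
    exact ENNReal.ofReal_le_ofReal h
  have hmin : a⁻¹ ≤ ENNReal.ofReal (2 * κ) * (min b c)⁻¹ := by
    calc a⁻¹ ≤ ENNReal.ofReal κ * ((min b c)⁻¹ + (min b c)⁻¹) := h'.trans (by gcongr <;> simp)
      _ = ENNReal.ofReal (2 * κ) * (min b c)⁻¹ := by
          rw [ENNReal.ofReal_mul zero_le_two, ENNReal.ofReal_ofNat, ← two_mul]; ring
  rw [ENNReal.ofReal_inv_of_pos (by positivity), mul_comm, ← div_eq_mul_inv, ← ENNReal.inv_le_inv,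
    ENNReal.inv_div (Or.inl ofReal_ne_top) (Or.inr hM)]
  simpa [div_eq_mul_inv] using hmin

theorem sigmaFinite_of_lintegral_ne_top {Ω : Type*} [MeasurableSpace Ω] {μ : Measure Ω}
    {f : Ω → ℝ≥0∞} (hf : Measurable f) (hpos : ∀ x, f x ≠ 0) (hint : ∫⁻ x, f x ∂μ ≠ ∞) :
    SigmaFinite μ := by
  refine Measure.sigmaFinite_of_countable (Set.countable_range fun n : ℕ =>
    {x | ((n + 1 : ℕ) : ℝ≥0∞)⁻¹ ≤ f x}) ?_ ?_
  · rintro _ ⟨n, rfl⟩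
    exact (meas_ge_le_lintegral_div hf.aemeasurable (by simp) (by simp)).trans_lt
      (ENNReal.div_lt_top hint (by simp))
  · refine Set.eq_univ_of_forall fun x => Set.mem_sUnion.2 ?_
    obtain ⟨n, hn⟩ := ENNReal.exists_inv_nat_lt (hpos x)
    refine ⟨_, ⟨n, rfl⟩, le_trans ?_ hn.le⟩
    exact ENNReal.inv_le_inv.2 (by exact_mod_cast n.le_succ)

section Pi

variable {Ω : Type*} [MeasurableSpace Ω] (μ : Measure Ω) [SigmaFinite μ]

theorem lintegral_pi_comp_removeNth {n : ℕ} (k : Fin (n + 1)) {F : Ω → (Fin n → Ω) → ℝ≥0∞}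
    (hF : Measurable (Function.uncurry F)) :
    ∫⁻ y, F (y k) (k.removeNth y) ∂Measure.pi (fun _ => μ) =
      ∫⁻ z, ∫⁻ w, F z w ∂Measure.pi (fun _ => μ) ∂μ :=
  ((measurePreserving_piFinSuccAbove (fun _ => μ) k).lintegral_comp hF).trans
    (lintegral_prod _ hF.aemeasurable)

theorem lintegral_pi_prod_eq_pow {h : Ω → ℝ≥0∞} (hh : Measurable h) (n : ℕ) :
    ∫⁻ y : Fin n → Ω, ∏ i, h (y i) ∂Measure.pi (fun _ => μ) = (∫⁻ z, h z ∂μ) ^ n := by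
  induction n with
  | zero => simp
  | succ n ih =>
    have hF : Measurable (Function.uncurry fun z (w : Fin n → Ω) => h z * ∏ j, h (w j)) := by
      fun_prop
    have hprod : Measurable fun w : Fin n → Ω => ∏ j, h (w j) := by fun_prop
    simp_rw [Fin.prod_univ_succAbove _ 0]
    refine (lintegral_pi_comp_removeNth μ 0 hF).trans ?_
    simp_rw [lintegral_const_mul _ hprod, ih]
    rw [lintegral_mul_const _ hh, pow_succ']

theorem lintegral_pow_succ_le_mul_lintegral_min {g : Ω → ℝ≥0∞} (hg : Measurable g) (n : ℕ) :
    (∫⁻ z, g z ∂μ) ^ (n + 1) ≤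
      (n + 1) * ∫⁻ z, g z * (∫⁻ w, min (g z) (g w) ∂μ) ^ n ∂μ := by
  have hF : Measurable (Function.uncurry fun z (w : Fin n → Ω) =>
      g z * ∏ j, min (g z) (g (w j))) := by
    fun_prop
  have hterm (k : Fin (n + 1)) :
      ∫⁻ y, g (y k) * ∏ j, min (g (y k)) (g (y (k.succAbove j))) ∂Measure.pi (fun _ => μ) =
        ∫⁻ z, g z * (∫⁻ w, min (g z) (g w) ∂μ) ^ n ∂μ := by
    refine (lintegral_pi_comp_removeNth μ k hF).trans (lintegral_congr fun z => ?_)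
    have hprod : Measurable fun w : Fin n → Ω => ∏ j, min (g z) (g (w j)) := by fun_prop
    rw [lintegral_const_mul _ hprod, lintegral_pi_prod_eq_pow μ (measurable_const.min hg)]
  have hmeas (k : Fin (n + 1)) : Measurable fun y : Fin (n + 1) → Ω =>
      g (y k) * ∏ j, min (g (y k)) (g (y (k.succAbove j))) := by
    fun_prop
  calc (∫⁻ z, g z ∂μ) ^ (n + 1) = ∫⁻ y, ∏ i, g (y i) ∂Measure.pi (fun _ => μ) :=
        (lintegral_pi_prod_eq_pow μ hg _).symm
    _ ≤ ∫⁻ y, ∑ k, g (y k) * ∏ j, min (g (y k)) (g (y (k.succAbove j)))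
          ∂Measure.pi (fun _ => μ) := lintegral_mono fun y => ENNReal.prod_le_sum_mul_prod_min _
    _ = (n + 1) * ∫⁻ z, g z * (∫⁻ w, min (g z) (g w) ∂μ) ^ n ∂μ := by
        rw [lintegral_finsetSum _ fun k _ => hmeas k]
        simp [hterm]

end Pi

section KernelOperator

variable {Ω : Type*} [MeasurableSpace Ω]

noncomputable def kernelOperator (k : Ω → Ω → ℝ≥0∞) (μ : Measure Ω) (h : Ω → ℝ≥0∞) (x : Ω) :
    ℝ≥0∞ :=
  ∫⁻ y, k x y * h y ∂μ

theorem kernelOperator_iterate_mul {ω : Measure Ω} {K k : Ω → Ω → ℝ≥0∞} {m : Ω → ℝ≥0∞}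
    (hm : Measurable m) (hmfin : ∀ x, m x ≠ ∞) (hK : ∀ x y, K x y = m x * k x y * m y)
    (j : ℕ) (h : Ω → ℝ≥0∞) :
    (kernelOperator K ω)^[j] (m * h) = m * (kernelOperator k (ω.withDensity (m * m)))^[j] h := by
  have hsemiconj : Function.Semiconj (m * ·) (kernelOperator k (ω.withDensity (m * m)))
      (kernelOperator K ω) := by
    intro h
    ext x
    simp only [kernelOperator, Pi.mul_apply, hK]
    rw [lintegral_withDensity_eq_lintegral_mul_non_measurable _ (hm.mul hm)
      (ae_of_all _ fun z => mul_lt_top (hmfin z).lt_top (hmfin z).lt_top),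
      ← lintegral_const_mul' _ _ (hmfin x)]
    exact lintegral_congr fun z => by simp only [Pi.mul_apply]; ring
  exact (hsemiconj.iterate_right j h).symm

variable {μ : Measure Ω} {k : Ω → Ω → ℝ≥0∞} {β : ℝ≥0∞}

theorem pow_mul_pow_le_factorial_mul_kernelOperator_iterate_succ [SigmaFinite μ] {x y : Ω}
    {t : ℝ≥0∞} (hkx : Measurable (k x)) (ht : ∀ z, β * min t (k x z) ≤ k y z) (j : ℕ)
    (ih : ∀ z, β ^ j * (∫⁻ w, min (k x z) (k x w) ∂μ) ^ j ≤
      j ! * (kernelOperator k μ)^[j] 1 z) :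
    β ^ (j + 1) * (∫⁻ z, min t (k x z) ∂μ) ^ (j + 1) ≤
      (j + 1)! * (kernelOperator k μ)^[j + 1] 1 y := by
  set F : Ω → ℝ≥0∞ := fun z => ∫⁻ w, min (k x z) (k x w) ∂μ
  have hkey : (∫⁻ z, min t (k x z) ∂μ) ^ (j + 1) ≤
      (j + 1) * ∫⁻ z, min t (k x z) * F z ^ j ∂μ := by
    refine (lintegral_pow_succ_le_mul_lintegral_min μ (measurable_const.min hkx) j).trans ?_
    exact mul_le_mul_right (lintegral_mono fun z => mul_le_mul_right (pow_le_pow_left'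
      (lintegral_mono fun w => min_le_min (min_le_right _ _) (min_le_right _ _)) j) _) _
  calc β ^ (j + 1) * (∫⁻ z, min t (k x z) ∂μ) ^ (j + 1)
      ≤ β ^ (j + 1) * ((j + 1) * ∫⁻ z, min t (k x z) * F z ^ j ∂μ) := by gcongr
    _ = (j + 1) * (β ^ j * (β * ∫⁻ z, min t (k x z) * F z ^ j ∂μ)) := by ring
    _ ≤ (j + 1) * (β ^ j * ∫⁻ z, k y z * F z ^ j ∂μ) := by
        gcongr
        refine (lintegral_const_mul_le _ _).trans (lintegral_mono fun z => ?_)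
        rw [← mul_assoc]
        gcongr
        exact ht z
    _ ≤ (j + 1) * ∫⁻ z, k y z * (j ! * (kernelOperator k μ)^[j] 1 z) ∂μ := by
        gcongr
        refine (lintegral_const_mul_le _ _).trans (lintegral_mono fun z => ?_)
        rw [mul_left_comm]
        exact mul_le_mul_right (ih z) _
    _ = (j + 1)! * (kernelOperator k μ)^[j + 1] 1 y := by
        simp_rw [mul_left_comm (k y _)]
        rw [lintegral_const_mul' _ _ (natCast_ne_top _), Function.iterate_succ_apply',
          kernelOperator, Nat.factorial_succ, Nat.cast_mul, Nat.cast_succ, mul_assoc]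

theorem pow_mul_pow_le_factorial_mul_kernelOperator_iterate [SigmaFinite μ] {x : Ω}
    (hkx : Measurable (k x)) (hsymm : ∀ a b, k a b = k b a)
    (hchain : ∀ p q r, β * min (k p r) (k r q) ≤ k p q) (j : ℕ) (y : Ω) :
    β ^ j * (∫⁻ w, min (k x y) (k x w) ∂μ) ^ j ≤ j ! * (kernelOperator k μ)^[j] 1 y := by
  induction j generalizing y with
  | zero => simp
  | succ j ih =>
    refine pow_mul_pow_le_factorial_mul_kernelOperator_iterate_succ hkx (fun z => ?_) j ih
    simpa only [hsymm y x] using hchain y z x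

theorem mul_pow_le_factorial_mul_kernelOperator_iterate [SigmaFinite μ] {x : Ω}
    (hkx : Measurable (k x)) (hsymm : ∀ a b, k a b = k b a) (hβ : β ≤ 1)
    (hchain : ∀ p q r, β * min (k p r) (k r q) ≤ k p q) (j : ℕ) :
    (β * kernelOperator k μ 1 x) ^ j ≤ j ! * (kernelOperator k μ)^[j] 1 x := by
  cases j with
  | zero => simp
  | succ j =>
    have hbound := pow_mul_pow_le_factorial_mul_kernelOperator_iterate_succ (t := ⊤) (y := x) hkx
      (fun z => by simpa using mul_le_of_le_one_left zero_le hβ) j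
      (pow_mul_pow_le_factorial_mul_kernelOperator_iterate (μ := μ) hkx hsymm hchain j)
    simpa [kernelOperator, mul_pow] using hbound

theorem expE_mul_le_tsum_kernelOperator_iterate (hk : ∀ x, Measurable (k x))
    (hsymm : ∀ a b, k a b = k b a) (hpos : ∀ a b, k a b ≠ 0) (hβ : β ≤ 1)
    (hchain : ∀ p q r, β * min (k p r) (k r q) ≤ k p q) (x : Ω) :
    expE (β * kernelOperator k μ 1 x) ≤ ∑' j, (kernelOperator k μ)^[j] 1 x := by
  by_cases hu : kernelOperator k μ 1 x = ∞
  · refine le_top.trans (top_le_iff.2 ?_)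
    exact eq_top_iff.2 (hu ▸ ENNReal.le_tsum (f := fun j => (kernelOperator k μ)^[j] 1 x) 1)
  have : SigmaFinite μ :=
    sigmaFinite_of_lintegral_ne_top (hk x) (hpos x) (by simpa [kernelOperator] using hu)
  calc expE (β * kernelOperator k μ 1 x)
      ≤ ∑' j : ℕ, (β * kernelOperator k μ 1 x) ^ j / (j ! : ℝ≥0∞) :=
        expE_le_tsum_pow_div_factorial _
    _ ≤ ∑' j, (kernelOperator k μ)^[j] 1 x := ENNReal.tsum_le_tsum fun j =>
        ENNReal.div_le_of_le_mul'
          (mul_pow_le_factorial_mul_kernelOperator_iterate (hk x) hsymm hβ hchain j)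

end KernelOperator

theorem neumann_series_exp_lower_bound_general {Ω : Type*} [MeasurableSpace Ω] (ω : Measure Ω)
    (K : Ω → Ω → ℝ≥0∞) (m : Ω → ℝ≥0∞) (κ : ℝ)
    (hKmeas : Measurable (Function.uncurry K))
    (hmmeas : Measurable m)
    (hmpos : ∀ x, 0 < m x) (hmfin : ∀ x, m x < ∞)
    (hKsymm : ∀ x y, K x y = K y x)
    (hKpos : ∀ x y, 0 < K x y)
    (htri : ∀ x y z,
      (K x y / (m x * m y))⁻¹.toReal ≤
        κ * ((K x z / (m x * m z))⁻¹.toReal + (K z y / (m z * m y))⁻¹.toReal))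
    (T : (Ω → ℝ≥0∞) → (Ω → ℝ≥0∞))
    (hT : ∀ h x, T h x = ∫⁻ y, K x y * h y ∂ω) :
    ∃ c : ℝ, 0 < c ∧ ∀ x : Ω,
      m x * expE (ENNReal.ofReal c * (T m x / m x)) ≤ ∑' j : ℕ, (T^[j] m) x := by
  set κ' := max κ 1
  refine ⟨(2 * κ')⁻¹, by positivity, fun x => ?_⟩
  set k : Ω → Ω → ℝ≥0∞ := fun a b => K a b / (m a * m b)
  set S := kernelOperator k (ω.withDensity (m * m))
  have hk_meas (a : Ω) : Measurable (k a) := by fun_prop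
  have hk_symm (a b : Ω) : k a b = k b a := by simp only [k, hKsymm a b, mul_comm (m a)]
  have hk_ne_zero (a b : Ω) : k a b ≠ 0 :=
    (ENNReal.div_pos (hKpos a b).ne' (mul_lt_top (hmfin a) (hmfin b)).ne).ne'
  have hK (a b : Ω) : K a b = m a * k a b * m b := by
    rw [mul_comm (m a), mul_assoc, ENNReal.div_mul_cancel
      (mul_ne_zero (hmpos a).ne' (hmpos b).ne') (mul_lt_top (hmfin a) (hmfin b)).ne]
  have hiter (j : ℕ) : T^[j] m x = m x * S^[j] 1 x := by
    rw [show T = kernelOperator K ω from funext fun h => funext (hT h)]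
    simpa using congrFun (kernelOperator_iterate_mul hmmeas (fun a => (hmfin a).ne) hK j 1) x
  have hchain (p q r : Ω) : ENNReal.ofReal (2 * κ')⁻¹ * min (k p r) (k r q) ≤ k p q :=
    ENNReal.ofReal_inv_two_mul_mul_min_le (by positivity) (hk_ne_zero p q) (hk_ne_zero p r)
      (hk_ne_zero r q) ((htri p q r).trans (by gcongr; exact le_max_left κ 1))
  have hβ : ENNReal.ofReal (2 * κ')⁻¹ ≤ 1 :=
    ENNReal.ofReal_le_one.2 (inv_le_one_of_one_le₀ (by linarith [le_max_right κ 1]))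
  have hTm : T m x / m x = S 1 x := by
    rw [← Function.iterate_one T, hiter 1, Function.iterate_one, mul_comm,
      ENNReal.mul_div_cancel_right (hmpos x).ne' (hmfin x).ne]
  calc m x * expE (ENNReal.ofReal (2 * κ')⁻¹ * (T m x / m x))
      ≤ m x * ∑' j, S^[j] 1 x := by
        rw [hTm]
        exact mul_le_mul_right (expE_mul_le_tsum_kernelOperator_iterate hk_meas hk_symm
          hk_ne_zero hβ hchain x) _
    _ = ∑' j, (T^[j] m) x := by simp only [hiter, ENNReal.tsum_mul_left]

/-- Lower exponential bound for the Neumann series (Theorem FNV, part (B)):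
if `K` is quasi-metrically modifiable with modifier `m` and quasi-metric constant `κ`,
then `∑_{j=0}^∞ T^j m (x) ≥ m(x) · exp (c · T m(x) / m(x))` for all `x`,
with `c > 0` depending only on `κ`. -/
theorem neumann_series_exp_lower_bound {Ω : Type*} [MeasurableSpace Ω] (ω : Measure Ω)
    (K : Ω → Ω → ℝ≥0∞) (m : Ω → ℝ≥0∞) (κ : ℝ) (hκ : 0 < κ)
    (hKmeas : Measurable (Function.uncurry K))
    (hmmeas : Measurable m)
    (hmpos : ∀ x, 0 < m x) (hmfin : ∀ x, m x < ∞)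
    (hKsymm : ∀ x y, K x y = K y x)
    (hKpos : ∀ x y, 0 < K x y)
    (htri : ∀ x y z,
      (K x y / (m x * m y))⁻¹.toReal ≤
        κ * ((K x z / (m x * m z))⁻¹.toReal + (K z y / (m z * m y))⁻¹.toReal))
    (T : (Ω → ℝ≥0∞) → (Ω → ℝ≥0∞))
    (hT : ∀ h x, T h x = ∫⁻ y, K x y * h y ∂ω) :
    ∃ c : ℝ, 0 < c ∧ ∀ x : Ω,
      m x * expE (ENNReal.ofReal c * (T m x / m x)) ≤ ∑' j : ℕ, (T^[j] m) x :=
  neumann_series_exp_lower_bound_general ω K m κ hKmeas hmmeas hmpos hmfin hKsymm hKpos htri T hT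
end

section
/- Let Ω ⊂ ℝⁿ be a bounded uniform domain with Green's function G and Martin kernel M(x,z) = lim_{y→z} G(x,y)/G(x₀,y) for z ∈ ∂Ω. Suppose G is quasi-metrically modifiable with modifier m(x) = min(1, G(x,x₀)) and quasi-metric constant κ. Then for each z ∈ ∂Ω, the function m̃(x) = M(x,z) is also a quasi-metric modifier for G, with quasi-metric constant 4κ² independent of z. -/
open Metric Filter Topology

/-!
The quasi-triangle inequality for `d` implies the four-point (Ptolemy-type) inequality
`d(x,y) d(w,p) ≤ 4κ² (d(x,w) d(y,p) + d(w,y) d(x,p))`. For `d(x,y) = m(x)m(y)/G(x,y)` the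
factor `m(x)m(y)m(w)m(p)` cancels, so `G(·,p)` is a modifier with constant `4κ²` for every pole
`p ∈ Ω`, and so is `G(·,p)/G(x₀,p)`. Letting `p → z` gives `M(·,z)`; its positivity follows from
the modifier inequality at `(x₀, x₀, x)`, because `M(x₀,z) = 1`.
-/

def IsQuasiMetricModifier {α : Type*} (G : α → α → ℝ) (s : Set α) (m : α → ℝ) (K : ℝ) : Prop :=
  ∀ x ∈ s, ∀ y ∈ s, ∀ w ∈ s, m x * m y / G x y ≤ K * (m x * m w / G x w + m w * m y / G w y)

lemma min_add_mul_min_add_le {B C a b : ℝ} (hB : 0 ≤ B) (hC : 0 ≤ C) (ha : 0 ≤ a) (hb : 0 ≤ b) :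
    min (B + C) (a + b) * min (B + a) (C + b) ≤ 4 * (B * b + C * a) := by
  set c := min (B + a) (C + b)
  have hcB : c ≤ B + a := min_le_left _ _
  have hcC : c ≤ C + b := min_le_right _ _
  have hc : 0 ≤ c := le_min (by positivity) (by positivity)
  have h₁ : min (B + C) (a + b) ≤ B + C := min_le_left _ _
  have h₂ : min (B + C) (a + b) ≤ a + b := min_le_right _ _
  -- If `c ≤ 2a` and `c ≤ 2b`, bound the first minimum by `B + C`; otherwise `c ≤ 2B` or `c ≤ 2C`
  -- (since `c ≤ B + a`, `c ≤ C + b`), and bound it by `a + b`.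
  rcases le_or_gt c (2 * b) with hcb | hcb <;> rcases le_or_gt c (2 * a) with hca | hca
  · nlinarith [mul_le_mul_of_nonneg_right h₁ hc]
  · nlinarith [mul_le_mul_of_nonneg_right h₂ hc]
  · nlinarith [mul_le_mul_of_nonneg_right h₂ hc]
  · nlinarith [mul_le_mul_of_nonneg_right h₂ hc]

lemma quasi_ptolemy {α : Type*} {s : Set α} {d : α → α → ℝ} {κ : ℝ}
    (hd : ∀ x ∈ s, ∀ y ∈ s, 0 ≤ d x y) (hsymm : ∀ x ∈ s, ∀ y ∈ s, d x y = d y x)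
    (htri : ∀ x ∈ s, ∀ y ∈ s, ∀ w ∈ s, d x y ≤ κ * (d x w + d w y))
    {x y w p : α} (hx : x ∈ s) (hy : y ∈ s) (hw : w ∈ s) (hp : p ∈ s) :
    d x y * d w p ≤ 4 * κ ^ 2 * (d x w * d y p + d w y * d x p) := by
  have le_mul_min : ∀ {t u v : ℝ}, t ≤ κ * u → t ≤ κ * v → t ≤ κ * min u v := by
    intro t u v hu hv
    rcases min_choice u v with h | h <;> rw [h] <;> assumption
  have hA : d x y ≤ κ * min (d x w + d w y) (d x p + d p y) :=
    le_mul_min (htri x hx y hy w hw) (htri x hx y hy p hp)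
  have hc : d w p ≤ κ * min (d w x + d x p) (d w y + d y p) :=
    le_mul_min (htri w hw p hp x hx) (htri w hw p hp y hy)
  rw [hsymm w hw x hx, hsymm p hp y hy] at *
  calc d x y * d w p
      ≤ (κ * min (d x w + d w y) (d x p + d y p)) * (κ * min (d x w + d x p) (d w y + d y p)) :=
        mul_le_mul hA hc (hd w hw p hp) ((hd x hx y hy).trans hA)
    _ = κ ^ 2 * (min (d x w + d w y) (d x p + d y p) * min (d x w + d x p) (d w y + d y p)) := by
        ring
    _ ≤ κ ^ 2 * (4 * (d x w * d y p + d w y * d x p)) :=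
        mul_le_mul_of_nonneg_left (min_add_mul_min_add_le (hd x hx w hw) (hd w hw y hy)
          (hd x hx p hp) (hd y hy p hp)) (sq_nonneg κ)
    _ = 4 * κ ^ 2 * (d x w * d y p + d w y * d x p) := by ring

namespace IsQuasiMetricModifier

variable {α : Type*} {G : α → α → ℝ} {s : Set α} {m : α → ℝ} {K : ℝ}

lemma punctured (hm : IsQuasiMetricModifier G s m K) (hmpos : ∀ x ∈ s, 0 < m x)
    (hGpos : ∀ x ∈ s, ∀ y ∈ s, 0 < G x y) (hGsymm : ∀ x ∈ s, ∀ y ∈ s, G x y = G y x)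
    {p : α} (hp : p ∈ s) :
    IsQuasiMetricModifier G s (fun x => G x p) (4 * K ^ 2) := by
  intro x hx y hy w hw
  have hptolemy := quasi_ptolemy (d := fun x y => m x * m y / G x y)
    (fun x hx y hy => (div_pos (mul_pos (hmpos x hx) (hmpos y hy)) (hGpos x hx y hy)).le)
    (fun x hx y hy => by rw [mul_comm, hGsymm x hx y hy]) hm hx hy hw hp
  have := hmpos x hx; have := hmpos y hy; have := hmpos w hw; have := hmpos p hp
  have := hGpos x hx y hy; have := hGpos x hx w hw; have := hGpos w hw y hy
  have := hGpos x hx p hp; have := hGpos y hy p hp; have := hGpos w hw p hp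
  set c := G x p * G y p * G w p / (m x * m y * m w * m p)
  calc G x p * G y p / G x y
      = c * (m x * m y / G x y * (m w * m p / G w p)) := by
        simp only [c]; field_simp
    _ ≤ c * (4 * K ^ 2 * (m x * m w / G x w * (m y * m p / G y p)
          + m w * m y / G w y * (m x * m p / G x p))) :=
        mul_le_mul_of_nonneg_left hptolemy (by positivity)
    _ = 4 * K ^ 2 * (G x p * G w p / G x w + G w p * G y p / G w y) := by
        simp only [c]; field_simp

lemma div_const (hm : IsQuasiMetricModifier G s m K) (c : ℝ) :
    IsQuasiMetricModifier G s (fun x => m x / c) K := by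
  intro x hx y hy w hw
  calc m x / c * (m y / c) / G x y = m x * m y / G x y / c ^ 2 := by ring
    _ ≤ K * (m x * m w / G x w + m w * m y / G w y) / c ^ 2 :=
        div_le_div_of_nonneg_right (hm x hx y hy w hw) (sq_nonneg c)
    _ = K * (m x / c * (m w / c) / G x w + m w / c * (m y / c) / G w y) := by ring

lemma of_tendsto {ι : Type*} {l : Filter ι} [l.NeBot] {f : ι → α → ℝ}
    (hf : ∀ x ∈ s, Tendsto (fun i => f i x) l (𝓝 (m x)))
    (hmod : ∀ᶠ i in l, IsQuasiMetricModifier G s (f i) K) :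
    IsQuasiMetricModifier G s m K := by
  intro x hx y hy w hw
  refine le_of_tendsto_of_tendsto (((hf x hx).mul (hf y hy)).div_const _)
    (((((hf x hx).mul (hf w hw)).div_const _).add
      (((hf w hw).mul (hf y hy)).div_const _)).const_mul _) ?_
  filter_upwards [hmod] with i hi using hi x hx y hy w hw

lemma pos_of_pos (hm : IsQuasiMetricModifier G s m K) (hK : 0 ≤ K)
    (hGpos : ∀ x ∈ s, ∀ y ∈ s, 0 < G x y) {x₀ : α} (hx₀ : x₀ ∈ s) (hm₀ : 0 < m x₀)
    {x : α} (hx : x ∈ s) : 0 < m x := by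
  by_contra! hmx
  have hineq := hm x₀ hx₀ x₀ hx₀ x hx
  have hlhs : 0 < m x₀ * m x₀ / G x₀ x₀ := by have := hGpos x₀ hx₀ x₀ hx₀; positivity
  have hrhs : m x₀ * m x / G x₀ x + m x * m x₀ / G x x₀ ≤ 0 := by
    have := hGpos x₀ hx₀ x hx; have := hGpos x hx x₀ hx₀
    have : m x₀ * m x ≤ 0 := mul_nonpos_of_nonneg_of_nonpos hm₀.le hmx
    rw [mul_comm (m x)]
    exact add_nonpos (div_nonpos_of_nonpos_of_nonneg this (by positivity))
      (div_nonpos_of_nonpos_of_nonneg this (by positivity))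
  nlinarith [mul_nonpos_of_nonneg_of_nonpos hK hrhs]

end IsQuasiMetricModifier

theorem martin_kernel_quasi_modifier_general {n : ℕ}
    (Ω : Set (EuclideanSpace ℝ (Fin n)))
    (G : EuclideanSpace ℝ (Fin n) → EuclideanSpace ℝ (Fin n) → ℝ)
    (hGpos : ∀ x ∈ Ω, ∀ y ∈ Ω, 0 < G x y)
    (hGsymm : ∀ x ∈ Ω, ∀ y ∈ Ω, G x y = G y x)
    (x₀ : EuclideanSpace ℝ (Fin n)) (hx₀ : x₀ ∈ Ω)
    (m : EuclideanSpace ℝ (Fin n) → ℝ) (hm : ∀ x, m x = min 1 (G x x₀))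
    (κ : ℝ)
    (hquasi : ∀ x ∈ Ω, ∀ y ∈ Ω, ∀ w ∈ Ω,
      m x * m y / G x y ≤ κ * (m x * m w / G x w + m w * m y / G w y))
    (M : EuclideanSpace ℝ (Fin n) → EuclideanSpace ℝ (Fin n) → ℝ)
    -- Martin kernel: `M(x,z) = lim_{y → z, y ∈ Ω} G(x,y)/G(x₀,y)` for `z ∈ ∂Ω`.
    (hM : ∀ x ∈ Ω, ∀ z ∈ frontier Ω,
      Tendsto (fun y => G x y / G x₀ y) (nhdsWithin z Ω) (nhds (M x z))) :
    ∀ z ∈ frontier Ω,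
      (∀ x ∈ Ω, 0 < M x z) ∧
      (∀ x ∈ Ω, ∀ y ∈ Ω, ∀ w ∈ Ω,
        M x z * M y z / G x y ≤
          4 * κ ^ 2 * (M x z * M w z / G x w + M w z * M y z / G w y)) := by
  intro z hz
  have hmpos : ∀ x ∈ Ω, 0 < m x := fun x hx => by
    rw [hm x]; exact lt_min one_pos (hGpos x hx x₀ hx₀)
  have : (𝓝[Ω] z).NeBot := mem_closure_iff_nhdsWithin_neBot.mp (frontier_subset_closure hz)
  have hmartin : IsQuasiMetricModifier G Ω (fun x => M x z) (4 * κ ^ 2) :=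
    .of_tendsto (fun x hx => hM x hx z hz) <| by
      filter_upwards [self_mem_nhdsWithin] with p hp
      exact ((IsQuasiMetricModifier.punctured hquasi hmpos hGpos hGsymm hp).div_const _)
  have hM₀ : M x₀ z = 1 := by
    refine tendsto_nhds_unique (hM x₀ hx₀ z hz) (tendsto_const_nhds.congr' ?_)
    filter_upwards [self_mem_nhdsWithin] with p hp
    exact (div_self (hGpos x₀ hx₀ p hp).ne').symm
  exact ⟨fun x hx => hmartin.pos_of_pos (by positivity) hGpos hx₀ (by rw [hM₀]; exact one_pos) hx,
    hmartin⟩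

/-- In a bounded uniform domain, the Martin kernel `M(·,z)` is a quasi-metric modifier
for the Green function `G`: if `d(x,y) = m(x)m(y)/G(x,y)` with `m(x) = min(1, G(x,x₀))`
is a quasi-metric with constant `κ` on `Ω`, then for every boundary point `z`,
`d̃(x,y) = M(x,z)M(y,z)/G(x,y)` is a quasi-metric with constant `4κ²` (independent of `z`). -/
theorem martin_kernel_quasi_modifier {n : ℕ}
    (Ω : Set (EuclideanSpace ℝ (Fin n)))
    (hΩopen : IsOpen Ω) (hΩconn : IsConnected Ω) (hΩbdd : Bornology.IsBounded Ω)
    (G : EuclideanSpace ℝ (Fin n) → EuclideanSpace ℝ (Fin n) → ℝ)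
    (hGpos : ∀ x ∈ Ω, ∀ y ∈ Ω, 0 < G x y)
    (hGsymm : ∀ x ∈ Ω, ∀ y ∈ Ω, G x y = G y x)
    (x₀ : EuclideanSpace ℝ (Fin n)) (hx₀ : x₀ ∈ Ω)
    (m : EuclideanSpace ℝ (Fin n) → ℝ) (hm : ∀ x, m x = min 1 (G x x₀))
    (κ : ℝ) (hκ : 0 < κ)
    (hquasi : ∀ x ∈ Ω, ∀ y ∈ Ω, ∀ w ∈ Ω,
      m x * m y / G x y ≤ κ * (m x * m w / G x w + m w * m y / G w y))
    (M : EuclideanSpace ℝ (Fin n) → EuclideanSpace ℝ (Fin n) → ℝ)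
    -- Martin kernel: `M(x,z) = lim_{y → z, y ∈ Ω} G(x,y)/G(x₀,y)` for `z ∈ ∂Ω`.
    (hM : ∀ x ∈ Ω, ∀ z ∈ frontier Ω,
      Tendsto (fun y => G x y / G x₀ y) (nhdsWithin z Ω) (nhds (M x z))) :
    ∀ z ∈ frontier Ω,
      (∀ x ∈ Ω, 0 < M x z) ∧
      (∀ x ∈ Ω, ∀ y ∈ Ω, ∀ w ∈ Ω,
        M x z * M y z / G x y ≤
          4 * κ ^ 2 * (M x z * M w z / G x w + M w z * M y z / G w y)) :=
  martin_kernel_quasi_modifier_general Ω G hGpos hGsymm x₀ hx₀ m hm κ hquasi M hM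
end
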